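/- arXiv:1505.06514 — 2 statements merged into one kernel-verified Lean document; each statement's English description precedes it below -/
import Mathlib

section
/- Let 0 < α < 1, let n be a natural number, and let a : Fin n → ℝ and A : Fin n → ℝ. For each natural number k define y_k(t) = Σ_{i} A_i · (a_i)^k · E_α(a_i · t^α). Then: (i) for every k and every t > 0, the function s ↦ (1/Γ(1-α)) ∫_0^s (s-ξ)^{-α}(y_k(ξ) − y_k(0)) dξ has derivative y_{k+1}(t) at t (so y_{k+1} is the Jumarie α-derivative of y_k); and (ii) writing p = ∏_{i} (X − a_i) ∈ ℝ[X], one has Σ_{k=0}^{n} (coeff of X^k in p) · y_k(t) = 0 for every t ≥ 0. In other words, y(t) = Σ_{i=1}^n A_i·E_α(a_i t^α) is a solution of the fractional differential equation (D^α − a_1)(D^α − a_2)···(D^α − a_n) y = 0, with D^{kα} interpreted as the k-fold iterate of the Jumarie derivative D^α. -/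
open intervalIntegral Real Polynomial

/-- The one-parameter Mittag-Leffler function `E_α(x) = Σ_{n=0}^∞ x^n / Γ(1+nα)`. -/
noncomputable def mittagLeffler (α x : ℝ) : ℝ := ∑' n : ℕ, x ^ n / Real.Gamma (1 + n * α)

/-- The integral appearing in the Jumarie (modified Riemann–Liouville) fractional
derivative of order `α` of `f` with start point `0`:
`s ↦ (1/Γ(1-α)) ∫_0^s (s-ξ)^(-α) (f(ξ) - f(0)) dξ`. -/
noncomputable def jumarieInt (α : ℝ) (f : ℝ → ℝ) (s : ℝ) : ℝ :=
  (1 / Real.Gamma (1 - α)) * ∫ ξ in (0:ℝ)..s, (s - ξ) ^ (-α) * (f ξ - f 0)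

/-!
Write `I^q f (s) = Γ(q)⁻¹ ∫₀ˢ (s - ξ)^(q-1) f(ξ) dξ` for the Riemann–Liouville integral. The Jumarie
integral of `f` is `I^(1-α) (f - f 0)`, and the Beta integral gives
`I^q ξ^β = Γ(β+1) / Γ(β+q+1) · s^(β+q)`. Applied termwise to the series of `E_α(c ξ^α) - 1` with
`q = 1 - α`, and to the series of `c E_α(c ξ^α)` with `q = 1`, both give
`∑ₙ c^(n+1) s^(nα+1) / Γ(nα+2)`. Hence the Jumarie integral of `E_α(c t^α)` is
`∫₀ˢ c E_α(c ξ^α) dξ`, whose derivative is `c E_α(c t^α)`; part (i) follows by linearity, and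
part (ii) because `∑ₖ pₖ yₖ(t) = ∑ᵢ Aᵢ p(aᵢ) E_α(aᵢ t^α)` and every `aᵢ` is a root of `p`.
Termwise integration is justified by absolute convergence, which comes from the ratio bound
`Γ(x + 1 - α) x^α ≤ Γ(x + 1)`, a consequence of the log-convexity of `Γ`.
-/

open Filter MeasureTheory Set

namespace Real

theorem Gamma_add_one_sub_mul_rpow_le {x a : ℝ} (hx : 0 < x) (ha0 : 0 ≤ a) (ha1 : a ≤ 1) :
    Gamma (x + 1 - a) * x ^ a ≤ Gamma (x + 1) := by
  rcases ha0.eq_or_lt with rfl | ha0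
  · simp
  rcases ha1.eq_or_lt with rfl | ha1
  · rw [add_sub_cancel_right, rpow_one, Gamma_add_one hx.ne', mul_comm]
  have hΓ : 0 < Gamma (x + 1) := Gamma_pos_of_pos (by linarith)
  have hconv := Gamma_mul_add_mul_le_rpow_Gamma_mul_rpow_Gamma hx (by linarith : 0 < x + 1)
    ha0 (sub_pos.2 ha1) (add_sub_cancel a 1)
  calc Gamma (x + 1 - a) * x ^ a
      ≤ Gamma x ^ a * Gamma (x + 1) ^ (1 - a) * x ^ a := by
        rw [show x + 1 - a = a * x + (1 - a) * (x + 1) by ring]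
        gcongr
    _ = (x * Gamma x) ^ a * Gamma (x + 1) ^ (1 - a) := by
        rw [mul_rpow hx.le (Gamma_pos_of_pos hx).le]
        ring
    _ = Gamma (x + 1) := by rw [← Gamma_add_one hx.ne', ← rpow_add hΓ, add_sub_cancel, rpow_one]

theorem summable_pow_div_Gamma_one_add_mul {α : ℝ} (hα0 : 0 < α) (hα1 : α ≤ 1) (x : ℝ) :
    Summable fun n : ℕ => x ^ n / Gamma (1 + n * α) := by
  refine summable_of_ratio_norm_eventually_le (r := 1 / 2) (by norm_num) ?_
  have hgrowth : Tendsto (fun n : ℕ => (((n : ℝ) + 1) * α) ^ α) atTop atTop :=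
    (tendsto_rpow_atTop hα0).comp
      ((tendsto_atTop_add_const_right _ 1 tendsto_natCast_atTop_atTop).atTop_mul_const hα0)
  filter_upwards [hgrowth.eventually_ge_atTop (2 * |x|)] with n hn
  have hG0 : 0 < Gamma (1 + n * α) := Gamma_pos_of_pos (by positivity)
  have hG1 : 0 < Gamma (1 + (n + 1 : ℕ) * α) := Gamma_pos_of_pos (by positivity)
  have hratio : Gamma (1 + n * α) * (((n : ℝ) + 1) * α) ^ α ≤ Gamma (1 + (n + 1 : ℕ) * α) := by
    have h := Gamma_add_one_sub_mul_rpow_le (x := ((n : ℝ) + 1) * α) (by positivity) hα0.le hα1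
    rwa [show ((n : ℝ) + 1) * α + 1 - α = 1 + n * α by ring,
      show ((n : ℝ) + 1) * α + 1 = 1 + (n + 1 : ℕ) * α by push_cast; ring] at h
  rw [norm_div, norm_div, norm_pow, norm_pow, norm_of_nonneg hG0.le, norm_of_nonneg hG1.le,
    norm_eq_abs, div_le_iff₀ hG1]
  calc |x| ^ (n + 1) = 1 / 2 * (|x| ^ n / Gamma (1 + n * α)) * (Gamma (1 + n * α) * (2 * |x|)) := by
        rw [pow_succ]; field_simp
    _ ≤ 1 / 2 * (|x| ^ n / Gamma (1 + n * α)) * Gamma (1 + (n + 1 : ℕ) * α) := by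
        gcongr; exact (mul_le_mul_of_nonneg_left hn hG0.le).trans hratio

theorem summable_pow_div_Gamma_two_add_mul {α : ℝ} (hα0 : 0 < α) (hα1 : α ≤ 1) (x : ℝ) :
    Summable fun n : ℕ => x ^ n / Gamma (n * α + 2) := by
  refine .of_norm_bounded (summable_pow_div_Gamma_one_add_mul hα0 hα1 |x|) fun n => ?_
  have hG0 : 0 < Gamma (1 + n * α) := Gamma_pos_of_pos (by positivity)
  have hle : Gamma (1 + n * α) ≤ Gamma (n * α + 2) := by
    rw [show (n : ℝ) * α + 2 = 1 + n * α + 1 by ring, Gamma_add_one (by positivity)]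
    exact le_mul_of_one_le_left hG0.le (by linarith [mul_nonneg n.cast_nonneg hα0.le])
  rw [norm_div, norm_pow, norm_eq_abs, norm_of_nonneg (hG0.trans_le hle).le]
  gcongr

end Real

theorem integral_sub_rpow_mul_rpow {s p q : ℝ} (hs : 0 < s) (hp : 0 < p) (hq : 0 < q) :
    ∫ ξ in (0 : ℝ)..s, (s - ξ) ^ (q - 1) * ξ ^ (p - 1)
      = Gamma p * Gamma q / Gamma (p + q) * s ^ (p + q - 1) := by
  have hbeta : Complex.betaIntegral p q = ((Gamma p * Gamma q / Gamma (p + q) : ℝ) : ℂ) := by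
    have h := Complex.Gamma_mul_Gamma_eq_betaIntegral (s := (p : ℂ)) (t := (q : ℂ))
      (by simpa using hp) (by simpa using hq)
    rw [← Complex.ofReal_add, Complex.Gamma_ofReal, Complex.Gamma_ofReal,
      Complex.Gamma_ofReal] at h
    have hΓ : (Gamma (p + q) : ℂ) ≠ 0 :=
      Complex.ofReal_ne_zero.2 (Gamma_pos_of_pos (add_pos hp hq)).ne'
    push_cast
    rw [eq_div_iff hΓ, h, mul_comm]
  apply Complex.ofReal_injective
  rw [← intervalIntegral.integral_ofReal]
  calc ∫ ξ in (0 : ℝ)..s, (((s - ξ) ^ (q - 1) * ξ ^ (p - 1) : ℝ) : ℂ)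
      = ∫ ξ in (0 : ℝ)..s, (ξ : ℂ) ^ ((p : ℂ) - 1) * ((s : ℂ) - ξ) ^ ((q : ℂ) - 1) := by
        refine integral_congr fun ξ hξ => ?_
        rw [uIcc_of_le hs.le] at hξ
        rw [Complex.ofReal_mul, Complex.ofReal_cpow (sub_nonneg.2 hξ.2),
          Complex.ofReal_cpow hξ.1, mul_comm]
        push_cast
        rfl
    _ = _ := by
        rw [Complex.betaIntegral_scaled _ _ hs, hbeta, Complex.ofReal_mul (_ / _),
          Complex.ofReal_cpow hs.le, mul_comm]
        push_cast
        rfl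

noncomputable def riemannLiouvilleIntegral (q : ℝ) (f : ℝ → ℝ) (s : ℝ) : ℝ :=
  (Gamma q)⁻¹ * ∫ ξ in (0 : ℝ)..s, (s - ξ) ^ (q - 1) * f ξ

theorem jumarieInt_eq_riemannLiouvilleIntegral (α : ℝ) (f : ℝ → ℝ) :
    jumarieInt α f = riemannLiouvilleIntegral (1 - α) fun ξ => f ξ - f 0 := by
  ext s
  rw [jumarieInt, riemannLiouvilleIntegral, one_div, sub_sub_cancel_left]

theorem riemannLiouvilleIntegral_one (f : ℝ → ℝ) (s : ℝ) :
    riemannLiouvilleIntegral 1 f s = ∫ ξ in (0 : ℝ)..s, f ξ := by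
  simp [riemannLiouvilleIntegral]

theorem riemannLiouvilleIntegral_rpow {q β s : ℝ} (hq : 0 < q) (hβ : -1 < β) (hs : 0 < s) :
    riemannLiouvilleIntegral q (fun ξ => ξ ^ β) s
      = Gamma (β + 1) / Gamma (β + 1 + q) * s ^ (β + q) := by
  have h := integral_sub_rpow_mul_rpow hs (neg_lt_iff_pos_add.mp hβ) hq
  rw [add_sub_cancel_right, show β + 1 + q - 1 = β + q by ring] at h
  rw [riemannLiouvilleIntegral, h]
  field_simp [(Gamma_pos_of_pos hq).ne']

theorem intervalIntegrable_sub_rpow_mul {r s : ℝ} (hr : -1 < r) (hs : 0 ≤ s) {g : ℝ → ℝ}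
    (hg : ContinuousOn g (Icc 0 s)) :
    IntervalIntegrable (fun ξ => (s - ξ) ^ r * g ξ) volume 0 s := by
  have hkernel : IntervalIntegrable (fun ξ : ℝ => (s - ξ) ^ r) volume 0 s := by
    simpa using (intervalIntegrable_rpow' (a := s) (b := 0) hr).comp_sub_left s
  exact hkernel.mul_continuousOn (by rwa [uIcc_of_le hs])

theorem riemannLiouvilleIntegral_tsum {q s : ℝ} (hq : 0 < q) (hs : 0 < s) {a β : ℕ → ℝ}
    (hβ : ∀ n, 0 ≤ β n)
    (hsum : Summable fun n => |a n| * riemannLiouvilleIntegral q (fun ξ => ξ ^ β n) s) :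
    riemannLiouvilleIntegral q (fun ξ => ∑' n, a n * ξ ^ β n) s
      = ∑' n, a n * riemannLiouvilleIntegral q (fun ξ => ξ ^ β n) s := by
  set F : ℕ → ℝ → ℝ := fun n ξ => (s - ξ) ^ (q - 1) * (a n * ξ ^ β n)
  have hF_int (n : ℕ) : IntervalIntegrable (F n) volume 0 s :=
    intervalIntegrable_sub_rpow_mul (by linarith) hs.le
      (continuous_const.mul (continuous_rpow_const (hβ n))).continuousOn
  have hF_norm (n : ℕ) : ∫ ξ in Ioc 0 s, ‖F n ξ‖
      = Gamma q * (|a n| * riemannLiouvilleIntegral q (fun ξ => ξ ^ β n) s) := by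
    have hnorm : EqOn (fun ξ => ‖F n ξ‖) (fun ξ => |a n| * ((s - ξ) ^ (q - 1) * ξ ^ β n))
        (Ioc 0 s) := fun ξ hξ => by
      simp only [F, norm_mul, norm_eq_abs, abs_of_nonneg (rpow_nonneg (sub_nonneg.2 hξ.2) _),
        abs_of_nonneg (rpow_nonneg hξ.1.le _)]
      ring
    rw [setIntegral_congr_fun measurableSet_Ioc hnorm, MeasureTheory.integral_const_mul,
      ← integral_of_le hs.le, riemannLiouvilleIntegral]
    field_simp [(Gamma_pos_of_pos hq).ne']
  have hinterchange := integral_tsum_of_summable_integral_norm (fun n => (hF_int n).1)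
    ((hsum.mul_left (Gamma q)).congr fun n => (hF_norm n).symm)
  simp only [riemannLiouvilleIntegral, integral_of_le hs.le, ← tsum_mul_left]
  rw [← hinterchange, ← tsum_mul_left]
  refine tsum_congr fun n => ?_
  simp only [F, mul_left_comm _ (a n), MeasureTheory.integral_const_mul]

theorem riemannLiouvilleIntegral_congr {q s : ℝ} (hs : 0 ≤ s) {f g : ℝ → ℝ}
    (h : EqOn f g (Icc 0 s)) :
    riemannLiouvilleIntegral q f s = riemannLiouvilleIntegral q g s := by
  unfold riemannLiouvilleIntegral
  congr 1
  refine integral_congr fun ξ hξ => ?_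
  rw [uIcc_of_le hs] at hξ
  simp only [h hξ]

theorem mittagLeffler_zero (α : ℝ) : mittagLeffler α 0 = 1 := by
  rw [mittagLeffler, tsum_eq_single 0 fun n hn => by simp [zero_pow hn]]
  simp

theorem continuous_mittagLeffler {α : ℝ} (hα0 : 0 < α) (hα1 : α ≤ 1) :
    Continuous (mittagLeffler α) := by
  refine continuous_iff_continuousAt.2 fun x => ?_
  set R := |x| + 1
  have hon : ContinuousOn (mittagLeffler α) (Icc (-R) R) :=
    continuousOn_tsum (fun n => ((continuous_pow n).div_const _).continuousOn)
      (summable_pow_div_Gamma_one_add_mul hα0 hα1 R) fun n y hy => by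
        rw [norm_div, norm_pow, norm_eq_abs, norm_of_nonneg (Gamma_pos_of_pos (by positivity)).le]
        gcongr
        exact abs_le.2 hy
  exact hon.continuousAt (Icc_mem_nhds (by linarith [neg_abs_le x]) (by linarith [le_abs_self x]))

theorem mittagLeffler_mul_rpow (α c : ℝ) {ξ : ℝ} (hξ : 0 ≤ ξ) :
    mittagLeffler α (c * ξ ^ α) = ∑' n : ℕ, c ^ n / Gamma (1 + n * α) * ξ ^ (n * α) := by
  refine tsum_congr fun n => ?_
  rw [mul_comm (n : ℝ) α, rpow_mul_natCast hξ]
  ring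

theorem mittagLeffler_mul_rpow_sub_one {α : ℝ} (hα0 : 0 < α) (hα1 : α ≤ 1) (c : ℝ) {ξ : ℝ}
    (hξ : 0 ≤ ξ) :
    mittagLeffler α (c * ξ ^ α) - 1
      = ∑' n : ℕ, c ^ (n + 1) / Gamma (1 + (n + 1) * α) * ξ ^ ((n + 1) * α) := by
  have hsum : Summable fun n : ℕ => c ^ n / Gamma (1 + n * α) * ξ ^ (n * α) :=
    (summable_pow_div_Gamma_one_add_mul hα0 hα1 (c * ξ ^ α)).congr fun n => by
      rw [mul_comm (n : ℝ) α, rpow_mul_natCast hξ]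
      ring
  rw [mittagLeffler_mul_rpow α c hξ, hsum.tsum_eq_zero_add]
  simp

theorem continuous_mittagLeffler_mul_rpow {α : ℝ} (hα0 : 0 < α) (hα1 : α ≤ 1) (c : ℝ) :
    Continuous fun ξ => mittagLeffler α (c * ξ ^ α) :=
  (continuous_mittagLeffler hα0 hα1).comp (continuous_const.mul (continuous_rpow_const hα0.le))

theorem summable_pow_succ_div_Gamma_mul_rpow {α : ℝ} (hα0 : 0 < α) (hα1 : α ≤ 1) (c : ℝ) {s : ℝ}
    (hs : 0 < s) :
    Summable fun n : ℕ => c ^ (n + 1) / Gamma (n * α + 2) * s ^ (n * α + 1) :=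
  ((summable_pow_div_Gamma_two_add_mul hα0 hα1 (c * s ^ α)).mul_left (c * s)).congr fun n => by
    rw [rpow_add hs, rpow_one, mul_comm (n : ℝ) α, rpow_mul_natCast hs.le]
    ring

theorem riemannLiouvilleIntegral_mittagLeffler_mul_rpow_sub_one {α : ℝ} (hα0 : 0 < α)
    (hα1 : α < 1) (c : ℝ) {s : ℝ} (hs : 0 < s) :
    riemannLiouvilleIntegral (1 - α) (fun ξ => mittagLeffler α (c * ξ ^ α) - 1) s
      = ∑' n : ℕ, c ^ (n + 1) / Gamma (n * α + 2) * s ^ (n * α + 1) := by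
  have hterm (b : ℝ) (n : ℕ) : b ^ (n + 1) / Gamma (1 + (n + 1) * α)
        * riemannLiouvilleIntegral (1 - α) (fun ξ => ξ ^ (((n : ℝ) + 1) * α)) s
      = b ^ (n + 1) / Gamma (n * α + 2) * s ^ (n * α + 1) := by
    rw [riemannLiouvilleIntegral_rpow (by linarith) (neg_one_lt_zero.trans_le (by positivity)) hs,
      show ((n : ℝ) + 1) * α + 1 + (1 - α) = n * α + 2 by ring,
      show ((n : ℝ) + 1) * α + (1 - α) = n * α + 1 by ring, add_comm 1 (((n : ℝ) + 1) * α)]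
    field_simp [(Gamma_pos_of_pos (by positivity : 0 < ((n : ℝ) + 1) * α + 1)).ne']
  rw [riemannLiouvilleIntegral_congr hs.le fun ξ hξ =>
      mittagLeffler_mul_rpow_sub_one hα0 hα1.le c hξ.1,
    riemannLiouvilleIntegral_tsum (by linarith) hs (fun n => by positivity) ?_]
  · exact tsum_congr (hterm c)
  · refine (summable_pow_succ_div_Gamma_mul_rpow hα0 hα1.le |c| hs).congr fun n => ?_
    rw [abs_div, abs_pow, abs_of_pos (Gamma_pos_of_pos (by positivity)), hterm]

theorem integral_mul_mittagLeffler_mul_rpow {α : ℝ} (hα0 : 0 < α) (hα1 : α ≤ 1) (c : ℝ) {s : ℝ}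
    (hs : 0 < s) :
    ∫ ξ in (0 : ℝ)..s, c * mittagLeffler α (c * ξ ^ α)
      = ∑' n : ℕ, c ^ (n + 1) / Gamma (n * α + 2) * s ^ (n * α + 1) := by
  have hterm (b : ℝ) (n : ℕ) : b ^ (n + 1) / Gamma (1 + n * α)
        * riemannLiouvilleIntegral 1 (fun ξ => ξ ^ ((n : ℝ) * α)) s
      = b ^ (n + 1) / Gamma (n * α + 2) * s ^ (n * α + 1) := by
    rw [riemannLiouvilleIntegral_rpow one_pos (neg_one_lt_zero.trans_le (by positivity)) hs,
      show (n : ℝ) * α + 1 + 1 = n * α + 2 by ring, add_comm 1 ((n : ℝ) * α)]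
    field_simp [(Gamma_pos_of_pos (by positivity : 0 < (n : ℝ) * α + 1)).ne']
  have hseries : EqOn (fun ξ => c * mittagLeffler α (c * ξ ^ α))
      (fun ξ => ∑' n : ℕ, c ^ (n + 1) / Gamma (1 + n * α) * ξ ^ ((n : ℝ) * α)) (Icc 0 s) :=
    fun ξ hξ => by
      dsimp only
      rw [mittagLeffler_mul_rpow α c hξ.1, ← tsum_mul_left]
      exact tsum_congr fun n => by ring
  rw [← riemannLiouvilleIntegral_one, riemannLiouvilleIntegral_congr hs.le hseries,
    riemannLiouvilleIntegral_tsum one_pos hs (fun n => by positivity) ?_]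
  · exact tsum_congr (hterm c)
  · refine (summable_pow_succ_div_Gamma_mul_rpow hα0 hα1 |c| hs).congr fun n => ?_
    rw [abs_div, abs_pow, abs_of_pos (Gamma_pos_of_pos (by positivity)), hterm]

theorem jumarieInt_mittagLeffler_mul_rpow {α : ℝ} (hα0 : 0 < α) (hα1 : α < 1) (c : ℝ) {s : ℝ}
    (hs : 0 < s) :
    jumarieInt α (fun ξ => mittagLeffler α (c * ξ ^ α)) s
      = ∫ ξ in (0 : ℝ)..s, c * mittagLeffler α (c * ξ ^ α) := by
  simp only [jumarieInt_eq_riemannLiouvilleIntegral, zero_rpow hα0.ne', mul_zero,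
    mittagLeffler_zero]
  rw [riemannLiouvilleIntegral_mittagLeffler_mul_rpow_sub_one hα0 hα1 c hs,
    integral_mul_mittagLeffler_mul_rpow hα0 hα1.le c hs]

theorem hasDerivAt_jumarieInt_mittagLeffler_mul_rpow {α : ℝ} (hα0 : 0 < α) (hα1 : α < 1)
    (c : ℝ) {t : ℝ} (ht : 0 < t) :
    HasDerivAt (jumarieInt α fun ξ => mittagLeffler α (c * ξ ^ α))
      (c * mittagLeffler α (c * t ^ α)) t := by
  have hcont : Continuous fun ξ => c * mittagLeffler α (c * ξ ^ α) :=
    continuous_const.mul (continuous_mittagLeffler_mul_rpow hα0 hα1.le c)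
  refine (hcont.integral_hasStrictDerivAt 0 t).hasDerivAt.congr_of_eventuallyEq ?_
  filter_upwards [Ioi_mem_nhds ht] with s hs using jumarieInt_mittagLeffler_mul_rpow hα0 hα1 c hs

theorem jumarieInt_const_mul (α c : ℝ) (f : ℝ → ℝ) :
    (jumarieInt α fun ξ => c * f ξ) = fun s => c * jumarieInt α f s := by
  ext s
  simp only [jumarieInt, ← mul_sub, mul_left_comm _ c, intervalIntegral.integral_const_mul]

theorem jumarieInt_finset_sum {ι : Type*} (S : Finset ι) {α s : ℝ} (hα : α < 1) (hs : 0 ≤ s)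
    {f : ι → ℝ → ℝ} (hf : ∀ i ∈ S, ContinuousOn (f i) (Icc 0 s)) :
    jumarieInt α (fun ξ => ∑ i ∈ S, f i ξ) s = ∑ i ∈ S, jumarieInt α (f i) s := by
  have hint : ∀ i ∈ S, IntervalIntegrable (fun ξ => (s - ξ) ^ (-α) * (f i ξ - f i 0)) volume 0 s :=
    fun i hi => intervalIntegrable_sub_rpow_mul (by linarith) hs ((hf i hi).sub continuousOn_const)
  simp only [jumarieInt, ← Finset.sum_sub_distrib, Finset.mul_sum]
  rw [integral_finsetSum hint, Finset.mul_sum]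

theorem hasDerivAt_jumarieInt_finset_sum {ι : Type*} (S : Finset ι) {α t : ℝ} (hα : α < 1)
    (ht : 0 < t) {f : ι → ℝ → ℝ} {f' : ι → ℝ} (hf : ∀ i ∈ S, Continuous (f i))
    (hderiv : ∀ i ∈ S, HasDerivAt (jumarieInt α (f i)) (f' i) t) :
    HasDerivAt (jumarieInt α fun ξ => ∑ i ∈ S, f i ξ) (∑ i ∈ S, f' i) t := by
  refine (HasDerivAt.fun_sum hderiv).congr_of_eventuallyEq ?_
  filter_upwards [Ioi_mem_nhds ht] with s hs using
    jumarieInt_finset_sum S hα hs.le fun i hi => (hf i hi).continuousOn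

theorem Polynomial.sum_range_coeff_mul_sum_pow {R ι : Type*} [CommSemiring R] (p : R[X])
    {N : ℕ} (hN : p.natDegree < N) (S : Finset ι) (u a v : ι → R) :
    ∑ k ∈ Finset.range N, p.coeff k * ∑ i ∈ S, u i * a i ^ k * v i
      = ∑ i ∈ S, u i * p.eval (a i) * v i := by
  simp_rw [eval_eq_sum_range' hN, Finset.mul_sum, Finset.sum_mul]
  rw [Finset.sum_comm]
  exact Finset.sum_congr rfl fun i _ => Finset.sum_congr rfl fun k _ => by ring

/-- `y(t) = Σ_{i=1}^n A_i·E_α(a_i t^α)` solves the fractional differential equation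
`(D^α - a_1)(D^α - a_2)⋯(D^α - a_n) y = 0`, where `D^α` is the Jumarie derivative of
order `α ∈ (0,1)` with start point `0` and `D^{kα}` is its `k`-fold iterate:
writing `y_k(t) = Σ_i A_i a_i^k E_α(a_i t^α)` one has that `y_{k+1}` is the Jumarie
`α`-derivative of `y_k`, and `Σ_{k=0}^n coeff(∏_i (X - a_i), k) · y_k(t) = 0`. -/
theorem sum_mittagLeffler_solves_nth_order (α : ℝ) (hα0 : 0 < α) (hα1 : α < 1)
    (n : ℕ) (a A : Fin n → ℝ) :
    letI y : ℕ → ℝ → ℝ := fun k t => ∑ i, A i * (a i) ^ k * mittagLeffler α (a i * t ^ α)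
    (∀ k : ℕ, ∀ t : ℝ, 0 < t → HasDerivAt (jumarieInt α (y k)) (y (k + 1) t) t) ∧
    (∀ t : ℝ, 0 ≤ t →
      ∑ k ∈ Finset.range (n + 1), (∏ i, (X - C (a i)) : ℝ[X]).coeff k * y k t = 0) := by
  refine ⟨fun k t ht => ?_, fun t _ => ?_⟩
  · have hderiv := hasDerivAt_jumarieInt_finset_sum Finset.univ hα1 ht
      (f := fun i ξ => A i * a i ^ k * mittagLeffler α (a i * ξ ^ α))
      (fun i _ => continuous_const.mul (continuous_mittagLeffler_mul_rpow hα0 hα1.le (a i)))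
      fun i _ => by
        rw [jumarieInt_const_mul]
        exact (hasDerivAt_jumarieInt_mittagLeffler_mul_rpow hα0 hα1 (a i) ht).const_mul
          (A i * a i ^ k)
    convert hderiv using 1
    exact Finset.sum_congr rfl fun i _ => by ring
  · rw [Polynomial.sum_range_coeff_mul_sum_pow _ (by simp)]
    exact Finset.sum_eq_zero fun i _ => by
      simp [eval_prod, Finset.prod_eq_zero (Finset.mem_univ i)]
end

section
/- Let 0 < α < 1 and let t > 0. Define cos_α(t^α) = Σ_{k=0}^∞ (−1)^k · t^{2kα} / Γ(1+2kα) and sin_α(t^α) = Σ_{k=0}^∞ (−1)^k · t^{(2k+1)α} / Γ(1+(2k+1)α). Then the function s ↦ (1/Γ(1-α)) · ∫_0^s (s-ξ)^{-α} · (cos_α(ξ^α) − 1) dξ has derivative −sin_α(t^α) at the point t. (That is, the Jumarie fractional derivative of order α of cos_α(t^α) equals −sin_α(t^α).) -/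
/-!
Expanding `cos_α(ξ^α) - 1 = ∑_{k ≥ 0} (-1)^(k+1) ξ^((2k+2)α) / Γ((2k+2)α + 1)` and integrating
term by term against `(s - ξ)^(-α)`, the Beta integral sends `ξ^e / Γ(e + 1)` to
`Γ(1 - α) s^(e+1-α) / Γ(e + 2 - α)`, so for `s > 0` the fractional integral is
`∑_{k ≥ 0} (-1)^(k+1) s^((2k+1)α+1) / Γ((2k+1)α + 2)`. Differentiating this series term by term
gives `-sin_α(t^α)`. Both interchanges rest on the summability of `r^k / Γ(c + kβ)` for all `r`,
which follows from the lower bound `Γ x ≥ M^(x-2) / e^M` (valid for `M ≥ 1`, `x ≥ 2`).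
-/

open intervalIntegral Real

/-- The fractional cosine `cos_α(t^α) = Σ_{k=0}^∞ (-1)^k t^(2kα) / Γ(1+2kα)`. -/
noncomputable def fracCos (α t : ℝ) : ℝ :=
  ∑' k : ℕ, (-1) ^ k * t ^ (2 * (k : ℝ) * α) / Real.Gamma (1 + 2 * k * α)

/-- The fractional sine `sin_α(t^α) = Σ_{k=0}^∞ (-1)^k t^((2k+1)α) / Γ(1+(2k+1)α)`. -/
noncomputable def fracSin (α t : ℝ) : ℝ :=
  ∑' k : ℕ, (-1) ^ k * t ^ ((2 * (k : ℝ) + 1) * α) / Real.Gamma (1 + (2 * k + 1) * α)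

open Filter MeasureTheory

theorem rpow_sub_two_le_exp_mul_Gamma {M x : ℝ} (hM : 1 ≤ M) (hx : 2 ≤ x) :
    M ^ (x - 2) ≤ exp M * Gamma x := by
  obtain ⟨n, hn⟩ := Nat.exists_eq_add_of_le' (Nat.le_floor (by exact_mod_cast hx) : 2 ≤ ⌊x⌋₊)
  have hnx : (n : ℝ) + 2 ≤ x := by
    exact_mod_cast hn ▸ Nat.floor_le (by linarith : (0 : ℝ) ≤ x)
  have hxn : x < n + 3 := by
    have := Nat.lt_floor_add_one x
    rw [hn] at this
    push_cast at this
    linarith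
  calc M ^ (x - 2) ≤ M ^ (n + 1) := by
        rw [← rpow_natCast]
        exact rpow_le_rpow_of_exponent_le hM (by push_cast; linarith)
    _ ≤ exp M * (n + 1).factorial := by
        rw [← div_le_iff₀ (by positivity)]
        exact pow_div_factorial_le_exp M (by linarith) _
    _ = exp M * Gamma ((n + 1 : ℕ) + 1) := by rw [Gamma_nat_eq_factorial]
    _ ≤ exp M * Gamma x := by
        gcongr
        exact Gamma_strictMonoOn_Ici.monotoneOn (by simp; linarith) (by simp; linarith)
          (by push_cast; linarith)

theorem summable_pow_div_Gamma_add_mul {β : ℝ} (hβ : 0 < β) (c r : ℝ) :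
    Summable fun k : ℕ => r ^ k / Gamma (c + k * β) := by
  -- `M` is chosen so that `|r| / M ^ β ≤ 1 / 2`, which makes the bound below geometric.
  set M : ℝ := max 1 ((2 * |r|) ^ β⁻¹)
  have hM : 1 ≤ M := le_max_left _ _
  have hM0 : 0 < M := one_pos.trans_le hM
  have hrM : 2 * |r| ≤ M ^ β := by
    calc 2 * |r| = ((2 * |r|) ^ β⁻¹) ^ β := by
          rw [← rpow_mul (by positivity), inv_mul_cancel₀ hβ.ne', rpow_one]
      _ ≤ M ^ β := by gcongr; exact le_max_right _ _
  have hlarge : ∀ᶠ k : ℕ in atTop, 2 ≤ c + k * β :=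
    (tendsto_atTop_add_const_left _ c
      (tendsto_natCast_atTop_atTop.atTop_mul_const hβ)).eventually_ge_atTop 2
  refine (summable_geometric_two.mul_left (exp M / M ^ (c - 2))).of_norm_bounded_eventually_nat
    (hlarge.mono fun k hk => ?_)
  have hΓ : M ^ (c + k * β - 2) ≤ exp M * Gamma (c + k * β) :=
    rpow_sub_two_le_exp_mul_Gamma hM hk
  have hsplit : M ^ (c + k * β - 2) = M ^ (c - 2) * (M ^ β) ^ k := by
    rw [← rpow_mul_natCast hM0.le, ← rpow_add hM0]; ring_nf
  have hΓpos : 0 < Gamma (c + k * β) := Gamma_pos_of_pos (by linarith)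
  have hM0c : 0 < M ^ (c - 2) := rpow_pos_of_pos hM0 _
  rw [norm_div, norm_pow, Real.norm_eq_abs, Real.norm_of_nonneg hΓpos.le, div_le_iff₀ hΓpos]
  calc |r| ^ k = (2 * |r|) ^ k * (1 / 2) ^ k := by rw [← mul_pow]; ring
    _ ≤ M ^ (c - 2) * (M ^ β) ^ k / M ^ (c - 2) * (1 / 2) ^ k := by
        rw [mul_div_cancel_left₀ _ hM0c.ne']; gcongr
    _ ≤ exp M * Gamma (c + k * β) / M ^ (c - 2) * (1 / 2) ^ k := by rw [← hsplit]; gcongr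
    _ = exp M / M ^ (c - 2) * (1 / 2) ^ k * Gamma (c + k * β) := by ring

theorem summable_rpow_div_Gamma_add_mul {β x : ℝ} (hβ : 0 < β) (hx : 0 < x) (a c : ℝ) :
    Summable fun k : ℕ => x ^ (a + k * β) / Gamma (c + k * β) :=
  ((summable_pow_div_Gamma_add_mul hβ c (x ^ β)).mul_left (x ^ a)).congr fun k => by
    rw [rpow_add hx, mul_comm (k : ℝ), rpow_mul_natCast hx.le, mul_div_assoc]

theorem intervalIntegrable_rpow_mul_sub_rpow_half {a b s : ℝ} (ha : -1 < a) (hs : 0 < s) :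
    IntervalIntegrable (fun x => x ^ a * (s - x) ^ b) volume 0 (s / 2) := by
  refine (intervalIntegrable_rpow' ha).mul_continuousOn
    ((continuousOn_const.sub continuousOn_id).rpow_const fun x hx => Or.inl ?_)
  rw [Set.uIcc_of_le (by linarith)] at hx
  exact (sub_pos.2 (hx.2.trans_lt (by linarith))).ne'

theorem intervalIntegrable_rpow_mul_sub_rpow {a b s : ℝ} (ha : -1 < a) (hb : -1 < b)
    (hs : 0 < s) : IntervalIntegrable (fun x => x ^ a * (s - x) ^ b) volume 0 s := by
  refine (intervalIntegrable_rpow_mul_sub_rpow_half ha hs).trans ?_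
  have hright := (intervalIntegrable_rpow_mul_sub_rpow_half (b := a) hb hs).comp_sub_left s
  simp only [sub_sub_cancel, sub_zero, show s - s / 2 = s / 2 by ring] at hright
  simpa only [mul_comm] using hright.symm

theorem integral_rpow_mul_sub_rpow {a b s : ℝ} (ha : -1 < a) (hb : -1 < b) (hs : 0 < s) :
    ∫ x in (0 : ℝ)..s, x ^ a * (s - x) ^ b =
      Gamma (a + 1) * Gamma (b + 1) / Gamma (a + b + 2) * s ^ (a + b + 1) := by
  have hre : ∀ c : ℝ, -1 < c → 0 < ((c + 1 : ℝ) : ℂ).re := fun c hc => by simp; linarith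
  have hGamma := Complex.Gamma_mul_Gamma_eq_betaIntegral (hre a ha) (hre b hb)
  have hscaled := Complex.betaIntegral_scaled ((a + 1 : ℝ) : ℂ) ((b + 1 : ℝ) : ℂ) hs
  have hne : Complex.Gamma ((a + b + 2 : ℝ) : ℂ) ≠ 0 :=
    Complex.Gamma_ne_zero_of_re_pos (by simp; linarith)
  have hbeta : Complex.betaIntegral ((a + 1 : ℝ) : ℂ) ((b + 1 : ℝ) : ℂ) =
      ((Gamma (a + 1) * Gamma (b + 1) / Gamma (a + b + 2) : ℝ) : ℂ) := by
    rw [Complex.ofReal_div, Complex.ofReal_mul, ← Complex.Gamma_ofReal, ← Complex.Gamma_ofReal,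
      ← Complex.Gamma_ofReal, eq_div_iff hne, mul_comm, hGamma]
    push_cast; ring_nf
  have hcast :
      ∫ x in (0 : ℝ)..s, (x : ℂ) ^ (((a + 1 : ℝ) : ℂ) - 1) * ((s : ℂ) - x) ^ (((b + 1 : ℝ) : ℂ) - 1)
      = ((∫ x in (0 : ℝ)..s, x ^ a * (s - x) ^ b : ℝ) : ℂ) := by
    rw [← intervalIntegral.integral_ofReal]
    refine integral_congr fun x hx => ?_
    rw [Set.uIcc_of_le hs.le] at hx
    push_cast [Complex.ofReal_cpow hx.1, Complex.ofReal_cpow (sub_nonneg.2 hx.2)]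
    ring_nf
  apply Complex.ofReal_injective
  rw [← hcast, hscaled, hbeta, mul_comm]
  push_cast [Complex.ofReal_cpow hs.le]
  ring_nf

theorem intervalIntegral.hasSum_integral_of_summable_integral_norm {ι E : Type*} [Countable ι]
    [NormedAddCommGroup E] [NormedSpace ℝ E] {a b : ℝ} (hab : a ≤ b) {F : ι → ℝ → E}
    (hF_int : ∀ i, IntervalIntegrable (F i) volume a b)
    (hF_sum : Summable fun i => ∫ x in a..b, ‖F i x‖) :
    HasSum (fun i => ∫ x in a..b, F i x) (∫ x in a..b, ∑' i, F i x) := by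
  simp only [integral_of_le hab] at hF_sum ⊢
  exact MeasureTheory.hasSum_integral_of_summable_integral_norm (fun i => (hF_int i).1) hF_sum

theorem hasSum_integral_sub_rpow_mul_tsum {α s : ℝ} (hα : α < 1) (hs : 0 < s) {a e : ℕ → ℝ}
    (he : ∀ k, -1 < e k)
    (hsum : Summable fun k => |a k| * s ^ (e k + 1 - α) / Gamma (e k + 2 - α)) :
    HasSum (fun k => a k * s ^ (e k + 1 - α) / Gamma (e k + 2 - α))
      (1 / Gamma (1 - α) *
        ∫ ξ in (0 : ℝ)..s, (s - ξ) ^ (-α) * ∑' k, a k * ξ ^ e k / Gamma (e k + 1)) := by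
  have hΓe : ∀ k, 0 < Gamma (e k + 1) := fun k => Gamma_pos_of_pos (by linarith [he k])
  have hbeta : ∀ (c : ℝ) (k : ℕ),
      ∫ ξ in (0 : ℝ)..s, c / Gamma (e k + 1) * (ξ ^ e k * (s - ξ) ^ (-α))
      = Gamma (1 - α) * (c * s ^ (e k + 1 - α) / Gamma (e k + 2 - α)) := fun c k => by
    rw [intervalIntegral.integral_const_mul, integral_rpow_mul_sub_rpow (he k) (by linarith) hs]
    field_simp [(hΓe k).ne']
    ring_nf
  have hnorm : ∀ k, ∫ ξ in (0 : ℝ)..s, ‖a k / Gamma (e k + 1) * (ξ ^ e k * (s - ξ) ^ (-α))‖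
      = ∫ ξ in (0 : ℝ)..s, |a k| / Gamma (e k + 1) * (ξ ^ e k * (s - ξ) ^ (-α)) := fun k => by
    refine integral_congr fun ξ hξ => ?_
    rw [Set.uIcc_of_le hs.le] at hξ
    rw [norm_mul, norm_div, Real.norm_eq_abs, Real.norm_eq_abs, Real.norm_eq_abs,
      abs_of_pos (hΓe k),
      abs_of_nonneg (mul_nonneg (rpow_nonneg hξ.1 _) (rpow_nonneg (sub_nonneg.2 hξ.2) _))]
  have h := intervalIntegral.hasSum_integral_of_summable_integral_norm hs.le
    (F := fun k ξ => a k / Gamma (e k + 1) * (ξ ^ e k * (s - ξ) ^ (-α)))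
    (fun k => (intervalIntegrable_rpow_mul_sub_rpow (he k) (by linarith) hs).const_mul
      (a k / Gamma (e k + 1)))
    (by simpa only [hnorm, hbeta] using hsum.mul_left (Gamma (1 - α)))
  have hcancel : ∀ x, 1 / Gamma (1 - α) * (Gamma (1 - α) * x) = x := fun x => by
    rw [← mul_assoc, one_div_mul_cancel (Gamma_pos_of_pos (by linarith)).ne', one_mul]
  have hseries : ∀ ξ, ∑' k, a k / Gamma (e k + 1) * (ξ ^ e k * (s - ξ) ^ (-α))
      = (s - ξ) ^ (-α) * ∑' k, a k * ξ ^ e k / Gamma (e k + 1) := fun ξ => by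
    rw [← tsum_mul_left]
    congr 1 with k
    ring
  simpa only [hbeta, hcancel, hseries] using h.mul_left (1 / Gamma (1 - α))

theorem hasDerivAt_tsum_rpow_div_Gamma {a e : ℕ → ℝ} {t R : ℝ} (he : ∀ k, 0 ≤ e k)
    (ht : |t| < R) (hR : Summable fun k => |a k| * R ^ e k / Gamma (e k + 1)) :
    HasDerivAt (fun s => ∑' k, a k * s ^ (e k + 1) / Gamma (e k + 2))
      (∑' k, a k * t ^ e k / Gamma (e k + 1)) t := by
  have hΓ : ∀ k, 0 < Gamma (e k + 1) := fun k => Gamma_pos_of_pos (by linarith [he k])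
  have hderiv : ∀ k y, HasDerivAt (fun s => a k * s ^ (e k + 1) / Gamma (e k + 2))
      (a k * y ^ e k / Gamma (e k + 1)) y := fun k y => by
    refine (((hasDerivAt_rpow_const (x := y) (p := e k + 1) (Or.inr (by linarith [he k]))).const_mul
      (a k)).div_const (Gamma (e k + 2))).congr_deriv ?_
    rw [show e k + 2 = e k + 1 + 1 by ring, Gamma_add_one (by linarith [he k]),
      add_sub_cancel_right]
    field_simp [(hΓ k).ne', show e k + 1 ≠ 0 by linarith [he k]]
  have hbound : ∀ k, ∀ y ∈ Set.Ioo (-R) R,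
      ‖a k * y ^ e k / Gamma (e k + 1)‖ ≤ |a k| * R ^ e k / Gamma (e k + 1) := by
    intro k y hy
    rw [norm_div, norm_mul, Real.norm_eq_abs, Real.norm_eq_abs, Real.norm_of_nonneg (hΓ k).le]
    refine div_le_div_of_nonneg_right (mul_le_mul_of_nonneg_left ?_ (abs_nonneg _)) (hΓ k).le
    exact (abs_rpow_le_abs_rpow y (e k)).trans
      (rpow_le_rpow (abs_nonneg y) (abs_lt.2 hy).le (he k))
  have hR0 : 0 < R := (abs_nonneg t).trans_lt ht
  refine hasDerivAt_tsum_of_isPreconnected hR isOpen_Ioo isPreconnected_Ioo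
    (fun k y _ => hderiv k y) hbound (y₀ := 0) ⟨neg_lt_zero.2 hR0, hR0⟩ ?_ (abs_lt.1 ht)
  have hzero : ∀ k, a k * (0 : ℝ) ^ (e k + 1) / Gamma (e k + 2) = 0 := fun k => by
    rw [zero_rpow (by linarith [he k]), mul_zero, zero_div]
  simpa only [hzero] using summable_zero

theorem fracCos_sub_one {α ξ : ℝ} (hα : 0 < α) (hξ : 0 < ξ) :
    fracCos α ξ - 1 = ∑' k : ℕ, (-1) ^ (k + 1) * ξ ^ ((2 * (k : ℝ) + 2) * α) /
      Gamma ((2 * (k : ℝ) + 2) * α + 1) := by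
  have hsum : Summable fun k : ℕ => (-1) ^ k * ξ ^ (2 * (k : ℝ) * α) / Gamma (1 + 2 * k * α) := by
    rw [← summable_abs_iff]
    refine (summable_rpow_div_Gamma_add_mul (by positivity : 0 < 2 * α) hξ 0 1).congr fun k => ?_
    rw [abs_div, abs_mul, abs_pow, abs_neg, abs_one, one_pow, one_mul,
      abs_of_nonneg (rpow_nonneg hξ.le _), abs_of_pos (Gamma_pos_of_pos (by positivity))]
    ring_nf
  rw [fracCos, hsum.tsum_eq_zero_add]
  simp only [CharP.cast_eq_zero, mul_zero, zero_mul, rpow_zero, add_zero, Gamma_one, pow_zero,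
    div_one, mul_one, add_sub_cancel_left]
  congr 1 with k
  push_cast
  ring_nf

theorem integral_sub_rpow_mul_fracCos_sub_one {α s : ℝ} (hα0 : 0 < α) (hα1 : α < 1) (hs : 0 < s) :
    1 / Gamma (1 - α) * ∫ ξ in (0 : ℝ)..s, (s - ξ) ^ (-α) * (fracCos α ξ - 1) =
      ∑' k : ℕ, (-1) ^ (k + 1) * s ^ ((2 * (k : ℝ) + 1) * α + 1) /
        Gamma ((2 * (k : ℝ) + 1) * α + 2) := by
  have hsum : Summable fun k : ℕ => |(-1 : ℝ) ^ (k + 1)| * s ^ ((2 * (k : ℝ) + 2) * α + 1 - α) /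
      Gamma ((2 * (k : ℝ) + 2) * α + 2 - α) := by
    refine (summable_rpow_div_Gamma_add_mul (by positivity : 0 < 2 * α) hs (α + 1) (α + 2)).congr
      fun k => ?_
    rw [abs_pow, abs_neg, abs_one, one_pow, one_mul]
    ring_nf
  have h := hasSum_integral_sub_rpow_mul_tsum hα1 hs
    (fun _ => neg_one_lt_zero.trans_le (by positivity)) hsum
  refine (congrArg _ (intervalIntegral.integral_congr_ae
    (Eventually.of_forall fun ξ hξ => ?_))).trans (h.tsum_eq.symm.trans (tsum_congr fun k => ?_))
  · rw [Set.uIoc_of_le hs.le] at hξ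
    rw [fracCos_sub_one hα0 hξ.1]
  · ring_nf

/-- The Jumarie fractional derivative of order `α ∈ (0,1)` (start point `0`) of
`cos_α(t^α)` equals `-sin_α(t^α)`. -/
theorem jumarie_deriv_fracCos (α t : ℝ) (hα0 : 0 < α) (hα1 : α < 1) (ht : 0 < t) :
    HasDerivAt
      (fun s : ℝ => (1 / Real.Gamma (1 - α)) *
        ∫ ξ in (0:ℝ)..s, (s - ξ) ^ (-α) * (fracCos α ξ - 1))
      (-fracSin α t) t := by
  have hsum : Summable fun k : ℕ => |(-1 : ℝ) ^ (k + 1)| * (2 * t) ^ ((2 * (k : ℝ) + 1) * α) /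
      Gamma ((2 * (k : ℝ) + 1) * α + 1) := by
    refine (summable_rpow_div_Gamma_add_mul (by positivity : 0 < 2 * α) (by positivity : 0 < 2 * t)
      α (α + 1)).congr fun k => ?_
    rw [abs_pow, abs_neg, abs_one, one_pow, one_mul]
    ring_nf
  have hderiv := hasDerivAt_tsum_rpow_div_Gamma (fun k => by positivity)
    (by rw [abs_of_pos ht]; linarith) hsum
  have hsin : ∑' k : ℕ, (-1) ^ (k + 1) * t ^ ((2 * (k : ℝ) + 1) * α) /
      Gamma ((2 * (k : ℝ) + 1) * α + 1) = -fracSin α t := by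
    rw [fracSin, ← tsum_neg]
    congr 1 with k
    rw [pow_succ, add_comm 1]
    ring
  rw [← hsin]
  refine hderiv.congr_of_eventuallyEq ?_
  filter_upwards [lt_mem_nhds ht] with s hs
  exact integral_sub_rpow_mul_fracCos_sub_one hα0 hα1 hs
end
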